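/- arXiv:1512.07747 — 2 statements merged into one kernel-verified Lean document; each statement's English description precedes it below -/
import Mathlib

section
/- Let A be a finitely generated ℤ-algebra. Then a prime ideal 𝔭 of A is maximal if and only if the residue field A/𝔭 (when 𝔭 is maximal, its field of fractions in general) is a finite field; in particular every maximal ideal of A has finite residue field. -/
/-!
Since `ℤ` has dimension one and zero Jacobson radical, it is a Jacobson ring, so by
Zariski's lemma a field finitely generated as a `ℤ`-algebra is a finite `ℤ`-module. Such a field
cannot have characteristic zero (otherwise `ℤ` would be a field, being integral under it), so it
is a finitely generated torsion abelian group, hence finite. Conversely a finite domain is a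
field, and then it is its own fraction field.
-/

theorem Int.jacobson_bot : (⊥ : Ideal ℤ).jacobson = ⊥ := by
  refine eq_bot_iff.mpr fun x hx => Ideal.mem_bot.mpr ?_
  have hunit : IsUnit (x * x + 1) := Ideal.mem_jacobson_bot.mp hx x
  rcases Int.isUnit_iff.mp hunit with h | h <;> nlinarith

theorem isJacobsonRing_of_jacobson_bot {R : Type*} [CommRing R] [Ring.DimensionLEOne R]
    (h : (⊥ : Ideal R).jacobson = ⊥) : IsJacobsonRing R := by
  refine isJacobsonRing_iff_prime_eq.mpr fun P hP => ?_
  rcases eq_or_ne P ⊥ with rfl | hP0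
  · exact h
  · have := hP.isMaximal hP0
    exact Ideal.jacobson_eq_self_of_isMaximal

instance Int.isJacobsonRing : IsJacobsonRing ℤ :=
  isJacobsonRing_of_jacobson_bot Int.jacobson_bot

/- The `Algebra ℤ K` binder is arbitrary so that the lemma applies to quotient rings, whose
`ℤ`-algebra instance is only propositionally equal to `Ring.toIntAlgebra`. -/
theorem finite_of_isField_of_finiteType_int {K : Type*} [CommRing K] [Algebra ℤ K]
    [Algebra.FiniteType ℤ K] (hK : IsField K) : Finite K := by
  obtain rfl : ‹Algebra ℤ K› = Ring.toIntAlgebra K := Subsingleton.elim _ _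
  let := hK.toField
  have : Module.Finite ℤ K := finite_of_finite_type_of_isJacobsonRing ℤ K
  have hchar : ringChar K ≠ 0 := by
    intro h0
    have : CharZero K := (CharP.ringChar_zero_iff_CharZero (R := K)).mp h0
    exact Int.not_isField <|
      isField_of_isIntegral_of_isField (algebraMap ℤ K).injective_int (Field.toIsField K)
  refine Module.finite_of_fg_torsion K fun x => ⟨⟨ringChar K, ?_⟩, ?_⟩
  · exact mem_nonZeroDivisors_of_ne_zero (by exact_mod_cast hchar)
  · simp

theorem finite_fractionRing_iff {R : Type*} [CommRing R] [IsDomain R] :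
    Finite (FractionRing R) ↔ Finite R := by
  refine ⟨fun _ => Finite.of_injective _ (IsFractionRing.injective R (FractionRing R)),
    fun _ => ?_⟩
  have hR : IsField R := Finite.isField_of_domain R
  exact Finite.of_surjective _ (IsFractionRing.surjective_iff_isField.mpr hR)

theorem Ideal.isMaximal_iff_finite_quotient {A : Type*} [CommRing A] [Algebra.FiniteType ℤ A]
    (P : Ideal A) [P.IsPrime] : P.IsMaximal ↔ Finite (A ⧸ P) :=
  ⟨fun hP => finite_of_isField_of_finiteType_int
      ((Quotient.maximal_ideal_iff_isField_quotient P).mp hP),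
    fun _ => Quotient.maximal_of_isField P (Finite.isField_of_domain _)⟩

theorem maximal_iff_finite_residue (A : Type) [CommRing A] [Algebra.FiniteType ℤ A]
    (P : Ideal A) (hP : P.IsPrime) :
    (P.IsMaximal ↔ Finite (FractionRing (A ⧸ P))) ∧
    (P.IsMaximal → Finite (A ⧸ P)) :=
  ⟨P.isMaximal_iff_finite_quotient.trans finite_fractionRing_iff.symm,
    P.isMaximal_iff_finite_quotient.mp⟩
end

section
/- Let ρ: G → SL₂(ℂ) be a representation of a torsion-free group G with tr ρ(g) ≠ 0 for all g, let kM = ℚ(tr ρ(g)² : g ∈ G), and let σ be a field automorphism of K_M = ℚ(tr ρ(g) : g ∈ G) fixing kM. Define ε_σ: G → {±1} by σ(tr ρ(g)) = ε_σ(g)·tr ρ(g). Then ε_σ is a group homomorphism G → {±1}. -/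
theorem fricke2 (A B : Matrix.SpecialLinearGroup (Fin 2) ℂ) :
    Matrix.trace ((A * B⁻¹ : Matrix.SpecialLinearGroup (Fin 2) ℂ) : Matrix (Fin 2) (Fin 2) ℂ)
      = Matrix.trace (A : Matrix (Fin 2) (Fin 2) ℂ) * Matrix.trace (B : Matrix (Fin 2) (Fin 2) ℂ)
        - Matrix.trace ((A * B : Matrix.SpecialLinearGroup (Fin 2) ℂ) : Matrix (Fin 2) (Fin 2) ℂ) := by
  simp only [Matrix.SpecialLinearGroup.coe_mul, Matrix.SpecialLinearGroup.coe_inv]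
  simp [Matrix.trace_fin_two, Matrix.mul_apply, Fin.sum_univ_two, Matrix.adjugate_fin_two]
  ring


/-- If `σ` is an automorphism of the trace field `K = ℚ(tr ρ g)` fixing the invariant
trace field `k = ℚ((tr ρ g)²)`, and `ε : G → ℂ` satisfies `σ(tr ρ g) = ε g · tr ρ g`,
then `ε` is a group homomorphism into `{±1}` (in particular multiplicative). -/
theorem eps_sigma_is_hom
    (G : Type) [Group G] (htf : ∀ g : G, IsOfFinOrder g → g = 1)
    (ρ : G →* Matrix.SpecialLinearGroup (Fin 2) ℂ)
    (htr : ∀ g : G,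
      Matrix.trace ((ρ g : Matrix.SpecialLinearGroup (Fin 2) ℂ) : Matrix (Fin 2) (Fin 2) ℂ) ≠ 0)
    (K k : IntermediateField ℚ ℂ)
    (hK : K = IntermediateField.adjoin ℚ
      (Set.range fun g : G => Matrix.trace ((ρ g : Matrix.SpecialLinearGroup (Fin 2) ℂ) : Matrix (Fin 2) (Fin 2) ℂ)))
    (hk : k = IntermediateField.adjoin ℚ
      (Set.range fun g : G => (Matrix.trace ((ρ g : Matrix.SpecialLinearGroup (Fin 2) ℂ) : Matrix (Fin 2) (Fin 2) ℂ)) ^ 2))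
    (hmem : ∀ g : G,
      Matrix.trace ((ρ g : Matrix.SpecialLinearGroup (Fin 2) ℂ) : Matrix (Fin 2) (Fin 2) ℂ) ∈ K)
    (σ : K ≃ₐ[ℚ] K) (hσ : ∀ x : K, (x : ℂ) ∈ k → σ x = x)
    (ε : G → ℂ)
    (hε : ∀ g : G,
      (σ ⟨Matrix.trace ((ρ g : Matrix.SpecialLinearGroup (Fin 2) ℂ) : Matrix (Fin 2) (Fin 2) ℂ), hmem g⟩ : ℂ) =
        ε g * Matrix.trace ((ρ g : Matrix.SpecialLinearGroup (Fin 2) ℂ) : Matrix (Fin 2) (Fin 2) ℂ)) :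
    (∀ g : G, ε g = 1 ∨ ε g = -1) ∧ ∀ g h : G, ε (g * h) = ε g * ε h := by
  set t : G → ℂ := fun g =>
    Matrix.trace ((ρ g : Matrix.SpecialLinearGroup (Fin 2) ℂ) : Matrix (Fin 2) (Fin 2) ℂ) with ht
  set τ : G → K := fun g => ⟨t g, hmem g⟩ with hτ
  have hσε : ∀ g : G, ((σ (τ g) : ℂ)) = ε g * t g := hε
  have hsq_mem : ∀ g : G, (t g) ^ 2 ∈ k := by
    intro g; rw [hk]; exact IntermediateField.subset_adjoin ℚ _ ⟨g, rfl⟩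
  -- ε g ^ 2 = 1
  have hsq : ∀ g : G, ε g ^ 2 = 1 := by
    intro g
    have h1 : σ (τ g ^ 2) = τ g ^ 2 := by
      apply hσ
      push_cast
      exact hsq_mem g
    have h2 : ((σ (τ g ^ 2) : ℂ)) = (ε g * t g) ^ 2 := by
      rw [map_pow]; push_cast [hσε g]; ring
    have h3 : (ε g * t g) ^ 2 = t g ^ 2 := by
      rw [← h2, h1]; push_cast; ring
    have h3' : ε g ^ 2 * t g ^ 2 = 1 * t g ^ 2 := by rw [one_mul, ← mul_pow]; exact h3
    exact mul_right_cancel₀ (pow_ne_zero 2 (htr g)) h3'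
  have htriple : ∀ g h : G, ε g * ε h * ε (g * h) = 1 := by
    intro g h
    have hfr : t (g * h⁻¹) = t g * t h - t (g * h) := by
      simp only [ht, map_mul, map_inv]
      exact fricke2 (ρ g) (ρ h)
    have hkey : t g * t h * t (g * h)
        = (t g ^ 2 * t h ^ 2 + t (g * h) ^ 2 - t (g * h⁻¹) ^ 2) / 2 := by
      rw [hfr]; ring
    have hTmem : ((τ g * τ h * τ (g * h) : K) : ℂ) ∈ k := by
      push_cast
      rw [hkey]
      refine k.div_mem (k.sub_mem (k.add_mem (k.mul_mem (hsq_mem g) (hsq_mem h))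
        (hsq_mem (g * h))) (hsq_mem (g * h⁻¹))) ?_
      simpa using k.algebraMap_mem (2 : ℚ)
    have h1 : σ (τ g * τ h * τ (g * h)) = τ g * τ h * τ (g * h) := hσ _ hTmem
    have h2 : (ε g * ε h * ε (g * h)) * (t g * t h * t (g * h)) = t g * t h * t (g * h) := by
      have := congrArg (fun x : K => (x : ℂ)) h1
      simp only [map_mul] at this
      push_cast [hσε] at this
      linear_combination this
    have hne : t g * t h * t (g * h) ≠ 0 :=
      mul_ne_zero (mul_ne_zero (htr g) (htr h)) (htr (g * h))
    have h2' : (ε g * ε h * ε (g * h)) * (t g * t h * t (g * h)) = 1 * (t g * t h * t (g * h)) := by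
      rw [one_mul]; exact h2
    exact mul_right_cancel₀ hne h2'
  constructor
  · intro g
    have := hsq g
    rw [sq, mul_self_eq_one_iff] at this
    exact this
  · intro g h
    have h1 := htriple g h
    have h2 : ε g * ε h * (ε g * ε h * ε (g * h)) = ε g * ε h := by rw [h1, mul_one]
    calc ε (g * h) = (ε g ^ 2) * (ε h ^ 2) * ε (g * h) := by rw [hsq g, hsq h]; ring
    _ = ε g * ε h := by rw [← h2]; ring
end
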